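/- Fix k = 1 and pattern T with T_ℓ = 1 iff ℓ ∈ {0, 2}. Let C be the CLAUSE gadget for k = 1: a NEAR-OR gadget (3-sun plus membrane vertex w, with operand vertices t_1, t_2, t_3 adjacent to w) where additionally each pair {t_i, t_j} (i ≠ j) is connected by three internally-disjoint paths of length two (i.e., three distinct middle vertices per pair, each adjacent to both t_i and t_j). Then in every pure Nash equilibrium s of the binary public goods game on C, exactly one of s_{t_1}, s_{t_2}, s_{t_3} equals 1; moreover for each choice of t ∈ {t_1, t_2, t_3} there exists a PNE with s_t = 1. -/

import Mathlib

/-- Number of active neighbors. -/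
noncomputable def degA {Ω : Type} (Adj : Ω → Ω → Prop) (s : Ω → Bool) (v : Ω) : ℕ :=
  Set.ncard {u | Adj v u ∧ s u = true}

/-- PNE for the picky pattern `T_ℓ = 1` iff `ℓ ∈ {0, k+1}`. -/
def isPNE {Ω : Type} (k : ℕ) (Adj : Ω → Ω → Prop) (s : Ω → Bool) : Prop :=
  ∀ v, s v = true ↔ (degA Adj s v = 0 ∨ degA Adj s v = k + 1)

/-- Edges of the 3-sun on vertices `0 = w, 1 = y, 2 = z, 3 = y', 4 = q, 5 = z'`. -/
def sunEdges : List (Fin 6 × Fin 6) :=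
  [(0, 1), (0, 2), (1, 2), (1, 3), (1, 4), (2, 4), (2, 5), (3, 4), (4, 5)]

/-- Adjacency relation of the 3-sun. -/
def sunAdj (a b : Fin 6) : Prop := (a, b) ∈ sunEdges ∨ (b, a) ∈ sunEdges

/-- Vertices of the CLAUSE gadget for `k = 1`: the 3-sun (`inl`), the three operand
vertices `t_i` (`inr (inl i)`), and, for each pair index `p` (connecting `t_p` and
`t_{p+1}`), three middle vertices `inr (inr (p, c))`, `c ∈ Fin 3`. -/
abbrev ClauseV := Fin 6 ⊕ (Fin 3 ⊕ (Fin 3 × Fin 3))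

/-- Adjacency of the CLAUSE gadget for `k = 1`: the 3-sun, each `t_i` adjacent to the
sun's top vertex `w = 0`, and for each pair `{t_p, t_{p+1}}` three internally-disjoint
paths of length two through the three middle vertices `(p, c)`. -/
def clauseAdj : ClauseV → ClauseV → Prop
  | Sum.inl a, Sum.inl b => sunAdj a b
  | Sum.inl a, Sum.inr (Sum.inl _) => a = 0
  | Sum.inr (Sum.inl _), Sum.inl a => a = 0
  | Sum.inr (Sum.inl i), Sum.inr (Sum.inr m) => m.1 = i ∨ m.1 + 1 = i
  | Sum.inr (Sum.inr m), Sum.inr (Sum.inl i) => m.1 = i ∨ m.1 + 1 = i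
  | _, _ => False

/-!
In a PNE a middle vertex sees only its two operands, so it is active iff they agree. If all
three operands were active, every middle vertex would be active and each operand would see at
least six active neighbours, so it could not be active. The 3-sun containing `w` rules out
zero or two active operands (a finite check over its `2^6` states), leaving exactly one.
Conversely, activating `q`, the operand `t_i` and the three middle vertices between the other two
operands gives a PNE.
-/

theorem degA_eq_card_filter {Ω : Type} [Fintype Ω] (Adj : Ω → Ω → Prop) [DecidableRel Adj]
    (s : Ω → Bool) (v : Ω) :
    degA Adj s v = (Finset.univ.filter fun u => Adj v u ∧ s u = true).card := by
  rw [degA, ← Set.ncard_coe_finset]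
  simp

theorem isPNE_iff_card_filter {Ω : Type} [Fintype Ω] (k : ℕ) (Adj : Ω → Ω → Prop)
    [DecidableRel Adj] (s : Ω → Bool) :
    isPNE k Adj s ↔ ∀ v, s v = true ↔
      ((Finset.univ.filter fun u => Adj v u ∧ s u = true).card = 0 ∨
        (Finset.univ.filter fun u => Adj v u ∧ s u = true).card = k + 1) := by
  simp only [isPNE, degA_eq_card_filter]

instance : DecidableRel sunAdj := fun a b => by
  unfold sunAdj
  infer_instance

instance : DecidableRel clauseAdj := fun a b => by
  rcases a with a | a | a <;> rcases b with b | b | b <;> simp only [clauseAdj] <;> infer_instance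

def sunDeg (a : ℕ) (σ : Fin 6 → Bool) (v : Fin 6) : ℕ :=
  (Finset.univ.filter fun u => sunAdj v u ∧ σ u = true).card + if v = 0 then a else 0

theorem sun_restrictive {a : ℕ} {σ : Fin 6 → Bool}
    (hσ : ∀ v, σ v = true ↔ (sunDeg a σ v = 0 ∨ sunDeg a σ v = 2)) : a ≠ 0 ∧ a ≠ 2 := by
  constructor <;> rintro rfl <;> revert σ hσ <;> decide

abbrev operand (i : Fin 3) : ClauseV := Sum.inr (Sum.inl i)

abbrev middle (p c : Fin 3) : ClauseV := Sum.inr (Sum.inr (p, c))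

def activeOperands (s : ClauseV → Bool) : Finset (Fin 3) :=
  Finset.univ.filter fun i => s (operand i) = true

theorem degA_clause_sun (s : ClauseV → Bool) (v : Fin 6) :
    degA clauseAdj s (Sum.inl v) = sunDeg (activeOperands s).card (s ∘ Sum.inl) v := by
  rw [degA_eq_card_filter, sunDeg, activeOperands]
  simp only [Finset.card_filter, Fintype.sum_sum_type]
  split_ifs with h
  · simp [clauseAdj, h]
  · simp only [clauseAdj, h, false_and, ↓reduceIte, Finset.sum_const_zero, add_zero,
      Function.comp_apply]
    -- the two sums differ only in their `Decidable` instances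
    congr

theorem degA_clause_middle (s : ClauseV → Bool) (p c : Fin 3) :
    degA clauseAdj s (middle p c) = (s (operand p)).toNat + (s (operand (p + 1))).toNat := by
  rw [degA_eq_card_filter, Finset.card_filter]
  simp only [Fintype.sum_sum_type, Fin.sum_univ_three]
  fin_cases p <;> cases h0 : s (operand 0) <;> cases h1 : s (operand 1) <;>
    cases h2 : s (operand 2) <;> simp [clauseAdj, h0, h1, h2]

theorem six_le_degA_operand {s : ClauseV → Bool} (hs : ∀ p c, s (middle p c) = true)
    (i : Fin 3) : 6 ≤ degA clauseAdj s (operand i) := by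
  rw [degA_eq_card_filter, Finset.card_filter]
  simp only [Fintype.sum_sum_type, Fintype.sum_prod_type]
  fin_cases i <;> simp [clauseAdj, hs, Fin.sum_univ_three]

theorem middle_active_iff {s : ClauseV → Bool} (hs : isPNE 1 clauseAdj s) (p c : Fin 3) :
    s (middle p c) = true ↔ s (operand p) = s (operand (p + 1)) := by
  rw [hs, degA_clause_middle]
  cases s (operand p) <;> cases s (operand (p + 1)) <;> simp

theorem activeOperands_card_ne_zero_and_ne_two {s : ClauseV → Bool} (hs : isPNE 1 clauseAdj s) :
    (activeOperands s).card ≠ 0 ∧ (activeOperands s).card ≠ 2 :=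
  sun_restrictive (σ := s ∘ Sum.inl) fun v => by rw [Function.comp_apply, hs, degA_clause_sun]

theorem activeOperands_card_ne_three {s : ClauseV → Bool} (hs : isPNE 1 clauseAdj s) :
    (activeOperands s).card ≠ 3 := by
  intro h3
  have hall : ∀ i, s (operand i) = true := by
    have := Finset.eq_univ_of_card _ h3
    simpa [activeOperands, Finset.eq_univ_iff_forall] using this
  have hmid : ∀ p c, s (middle p c) = true := fun p c => by
    rw [middle_active_iff hs, hall, hall]
  have hdeg := (hs (operand 0)).mp (hall 0)
  have := six_le_degA_operand hmid 0
  omega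

def clauseWitness (i : Fin 3) : ClauseV → Bool
  | Sum.inl a => a = 4
  | Sum.inr (Sum.inl j) => j = i
  | Sum.inr (Sum.inr (p, _)) => p = i + 1

theorem isPNE_clauseWitness (i : Fin 3) : isPNE 1 clauseAdj (clauseWitness i) := by
  rw [isPNE_iff_card_filter]
  fin_cases i <;> decide

/-- In every PNE of the binary public goods game (pattern `T_ℓ = 1` iff `ℓ ∈ {0, 2}`)
on the CLAUSE gadget for `k = 1`, exactly one of the operand vertices `t_1, t_2, t_3`
is active; moreover, for each operand vertex there is a PNE in which it is active. -/
theorem stmt13 :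
    (∀ s : ClauseV → Bool, isPNE 1 clauseAdj s →
      (Finset.univ.filter (fun i : Fin 3 => s (Sum.inr (Sum.inl i)) = true)).card = 1) ∧
    (∀ i : Fin 3, ∃ s : ClauseV → Bool, isPNE 1 clauseAdj s ∧
      s (Sum.inr (Sum.inl i)) = true) := by
  refine ⟨fun s hs => ?_, fun i => ⟨clauseWitness i, isPNE_clauseWitness i, by simp [clauseWitness]⟩⟩
  obtain ⟨hne0, hne2⟩ := activeOperands_card_ne_zero_and_ne_two hs
  have hle : (activeOperands s).card ≤ 3 := Finset.card_le_univ _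
  have hne3 := activeOperands_card_ne_three hs
  change (activeOperands s).card = 1
  omega
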